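/- arXiv:1504.02701 — 2 statements merged into one kernel-verified Lean document; each statement's English description precedes it below -/
import Mathlib

section
/- Let X be a Banach space with a tight by support basis, and let T be a bounded operator on a block subspace [x_n] of X such that supp(T x_n) ∩ supp(x_m) = ∅ for all n ≠ m. Then T = D|_{[x_n]} + S with D: X → X a bounded diagonal operator and S a bounded strictly singular operator. -/
/-!
By the support hypothesis, `T` acts diagonally on the coordinates of the blocks:
`coord i (T u) = μ i * coord i u` for every `i` in the support of some `x n`. The basis is
unconditional (`expansion` is a `HasSum`), so every bounded sequence defines a bounded diagonal
operator. Truncating `μ` at a level `C ≫ ‖T‖` gives `D`. On the coordinates where `|μ i| > C`,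
`u` is recovered from `T u` by the diagonal operator `M` with entries `1 / μ i`, which has small
norm; hence `u ↦ u - M (T u)` is an isomorphism on `[x n]`, and its range is supported away from
the support of `S = T - D`. If `S` were an isomorphism on an infinite-dimensional subspace, the
images of that subspace under the two maps would be isomorphic with disjoint supports,
contradicting tightness.
-/

open scoped BigOperators Classical
open Filter Topology

structure SchauderBasis' (X : Type*) [NormedAddCommGroup X] [NormedSpace ℝ X] where
  e : ℕ → X
  coord : ℕ → X →L[ℝ] ℝ
  ortho : ∀ i j, coord i (e j) = if i = j then 1 else 0
  expansion : ∀ x : X, HasSum (fun i => coord i x • e i) x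

section Defs

variable {X : Type*} [NormedAddCommGroup X] [NormedSpace ℝ X]

def SchauderBasis'.IsUnconditionalWith (b : SchauderBasis' X) (C : ℝ) : Prop :=
  ∀ x y : X, (∀ i, |b.coord i y| ≤ |b.coord i x|) → ‖y‖ ≤ C * ‖x‖

def SchauderBasis'.supp (b : SchauderBasis' X) (x : X) : Set ℕ := {i | b.coord i x ≠ 0}

def StrictlySingular {E F : Type*} [NormedAddCommGroup E] [NormedSpace ℝ E]
    [NormedAddCommGroup F] [NormedSpace ℝ F] (T : E →L[ℝ] F) : Prop :=
  ∀ Y : Submodule ℝ E, ¬ FiniteDimensional ℝ Y →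
    ¬ ∃ c : ℝ, 0 < c ∧ ∀ y ∈ Y, c * ‖y‖ ≤ ‖T y‖

def SchauderBasis'.TightBySupport (b : SchauderBasis' X) : Prop :=
  ∀ Y Z : Submodule ℝ X, IsClosed (Y : Set X) → IsClosed (Z : Set X) →
    ¬ FiniteDimensional ℝ Y → ¬ FiniteDimensional ℝ Z →
    (∀ y ∈ Y, ∀ z ∈ Z, ∀ i, b.coord i y ≠ 0 → b.coord i z = 0) →
    IsEmpty (Y ≃L[ℝ] Z)

def SchauderBasis'.IsBlockSequence (b : SchauderBasis' X) (x : ℕ → X) : Prop :=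
  (∀ n, x n ≠ 0) ∧ (∀ n, (b.supp (x n)).Finite) ∧
    ∀ m n i j, m < n → b.coord i (x m) ≠ 0 → b.coord j (x n) ≠ 0 → i < j

def closedSpan (x : ℕ → X) : Submodule ℝ X :=
  (Submodule.span ℝ (Set.range x)).topologicalClosure

def SchauderBasis'.IsDiagonal (b : SchauderBasis' X) (D : X →L[ℝ] X) : Prop :=
  ∀ i, ∃ lam : ℝ, D (b.e i) = lam • b.e i

def IsL1Average (b : SchauderBasis' X) (x : X) (n : ℕ) (c : ℝ) : Prop :=
  0 < n ∧ 1 ≤ c ∧ ∃ xs : Fin n → X,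
    (∀ i, ‖xs i‖ ≤ 1) ∧
    (∀ i j : Fin n, i < j → ∀ p q, b.coord p (xs i) ≠ 0 → b.coord q (xs j) ≠ 0 → p < q) ∧
    x = (n : ℝ)⁻¹ • ∑ i, xs i ∧ 1 / c ≤ ‖x‖

end Defs

section Convexity

open scoped Pointwise

variable {ι : Type*} [DecidableEq ι]

lemma sum_smul_mem_convexHull_image_powerset {E : Type*} [AddCommGroup E] [Module ℝ E]
    (v : ι → E) {s : Finset ι} {σ : ι → ℝ}
    (hσ : ∀ i ∈ s, σ i ∈ Set.Icc (0 : ℝ) 1) :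
    ∑ i ∈ s, σ i • v i ∈ convexHull ℝ ((fun t => ∑ i ∈ t, v i) '' ↑s.powerset) := by
  induction s using Finset.induction_on with
  | empty => exact subset_convexHull ℝ _ ⟨∅, by simp, by simp⟩
  | insert a s ha ih =>
    have hQ := ih fun i hi => hσ i (Finset.mem_insert_of_mem hi)
    have hmono : convexHull ℝ ((fun t => ∑ i ∈ t, v i) '' ↑s.powerset) ⊆
        convexHull ℝ ((fun t => ∑ i ∈ t, v i) '' ↑(insert a s).powerset) :=
      convexHull_mono <| Set.image_mono <|
        Finset.coe_subset.2 (Finset.powerset_mono.2 (s.subset_insert a))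
    have hshift : v a +ᵥ convexHull ℝ ((fun t => ∑ i ∈ t, v i) '' ↑s.powerset) ⊆
        convexHull ℝ ((fun t => ∑ i ∈ t, v i) '' ↑(insert a s).powerset) := by
      rw [← convexHull_vadd]
      refine convexHull_mono ?_
      rintro _ ⟨_, ⟨t, ht, rfl⟩, rfl⟩
      rw [Finset.mem_coe, Finset.mem_powerset] at ht
      have hat : a ∉ t := fun h => ha (ht h)
      exact ⟨insert a t, Finset.mem_powerset.2 (Finset.insert_subset_insert a ht),
        by simp [Finset.sum_insert hat]⟩
    rw [Finset.sum_insert ha, add_comm]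
    exact (convex_convexHull ℝ _).add_smul_mem (hmono hQ)
      (by simpa [add_comm] using hshift (Set.vadd_mem_vadd_set hQ)) (hσ a (s.mem_insert_self a))

variable {E : Type*} [NormedAddCommGroup E] [NormedSpace ℝ E]

lemma norm_sum_smul_le_of_mem_Icc {v : ι → E} {s : Finset ι} {R : ℝ}
    (hR : ∀ t ⊆ s, ‖∑ i ∈ t, v i‖ ≤ R) {σ : ι → ℝ} (hσ : ∀ i ∈ s, σ i ∈ Set.Icc (0 : ℝ) 1) :
    ‖∑ i ∈ s, σ i • v i‖ ≤ R := by
  have hball : (fun t => ∑ i ∈ t, v i) '' ↑s.powerset ⊆ Metric.closedBall 0 R := by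
    rintro _ ⟨t, ht, rfl⟩
    simpa using hR t (Finset.mem_powerset.1 ht)
  simpa using convexHull_min hball (convex_closedBall 0 R)
    (sum_smul_mem_convexHull_image_powerset v hσ)

lemma norm_sum_smul_le {v : ι → E} {s : Finset ι} {R : ℝ}
    (hR : ∀ t ⊆ s, ‖∑ i ∈ t, v i‖ ≤ R) {σ : ι → ℝ} {c : ℝ} (hσ : ∀ i ∈ s, |σ i| ≤ c)
    (hc : 0 ≤ c) : ‖∑ i ∈ s, σ i • v i‖ ≤ 2 * c * R := by
  rcases hc.eq_or_lt with rfl | hc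
  · have hzero : ∑ i ∈ s, σ i • v i = 0 :=
      Finset.sum_eq_zero fun i hi => by simp [abs_nonpos_iff.1 (hσ i hi)]
    simp [hzero]
  have hsplit : ∑ i ∈ s, σ i • v i =
      c • (∑ i ∈ s, (max (σ i) 0 / c) • v i - ∑ i ∈ s, (max (-σ i) 0 / c) • v i) := by
    rw [← Finset.sum_sub_distrib, Finset.smul_sum]
    refine Finset.sum_congr rfl fun i _ => ?_
    rw [← sub_smul, smul_smul, mul_sub, mul_div_cancel₀ _ hc.ne', mul_div_cancel₀ _ hc.ne']
    congr 1
    rcases le_total (σ i) 0 with h | h <;> simp [h]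
  have hpos : ∀ i ∈ s, max (σ i) 0 / c ∈ Set.Icc (0 : ℝ) 1 := fun i hi =>
    ⟨by positivity, (div_le_one hc).2 (max_le ((le_abs_self _).trans (hσ i hi)) hc.le)⟩
  have hneg : ∀ i ∈ s, max (-σ i) 0 / c ∈ Set.Icc (0 : ℝ) 1 := fun i hi =>
    ⟨by positivity, (div_le_one hc).2 (max_le ((neg_le_abs _).trans (hσ i hi)) hc.le)⟩
  calc ‖∑ i ∈ s, σ i • v i‖
      ≤ c * (‖∑ i ∈ s, (max (σ i) 0 / c) • v i‖ + ‖∑ i ∈ s, (max (-σ i) 0 / c) • v i‖) := by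
        rw [hsplit, norm_smul, Real.norm_of_nonneg hc.le]
        gcongr
        exact norm_sub_le _ _
    _ ≤ c * (R + R) := by
        gcongr
        exacts [norm_sum_smul_le_of_mem_Icc hR hpos, norm_sum_smul_le_of_mem_Icc hR hneg]
    _ = 2 * c * R := by ring

end Convexity

lemma Summable.exists_forall_norm_sum_le {ι E : Type*} [NormedAddCommGroup E] {f : ι → E}
    (hf : Summable f) : ∃ C, ∀ s : Finset ι, ‖∑ i ∈ s, f i‖ ≤ C := by
  obtain ⟨s₀, hs₀⟩ := hf.vanishing (Metric.ball_mem_nhds (0 : E) one_pos)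
  refine ⟨∑ i ∈ s₀, ‖f i‖ + 1, fun s => ?_⟩
  rw [← Finset.sum_filter_add_sum_filter_not s (· ∈ s₀)]
  have hin : ‖∑ i ∈ s with i ∈ s₀, f i‖ ≤ ∑ i ∈ s₀, ‖f i‖ :=
    (norm_sum_le _ _).trans (Finset.sum_le_sum_of_subset_of_nonneg
      (fun i hi => (Finset.mem_filter.1 hi).2) fun i _ _ => norm_nonneg _)
  have hout : ‖∑ i ∈ s with i ∉ s₀, f i‖ ≤ 1 := by
    have := hs₀ (s.filter (· ∉ s₀))
      (Finset.disjoint_left.2 fun i hi => (Finset.mem_filter.1 hi).2)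
    exact (mem_ball_zero_iff.1 this).le
  exact (norm_add_le _ _).trans (add_le_add hin hout)

namespace SchauderBasis'

variable {X : Type*} [NormedAddCommGroup X] [NormedSpace ℝ X] (b : SchauderBasis' X)

lemma ext_coord {w w' : X} (h : ∀ i, b.coord i w = b.coord i w') : w = w' :=
  (b.expansion w).unique (by simpa only [h] using b.expansion w')

lemma isDiagonal_of_coord {D : X →L[ℝ] X} {σ : ℕ → ℝ}
    (hD : ∀ x j, b.coord j (D x) = σ j * b.coord j x) : b.IsDiagonal D :=
  fun i => ⟨σ i, b.ext_coord fun j => by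
    rw [hD, map_smul, b.ortho, smul_eq_mul]
    split_ifs with h <;> simp [h]⟩

variable [CompleteSpace X]

lemma exists_norm_sum_coord_smul_le :
    ∃ K, 0 ≤ K ∧ ∀ (s : Finset ℕ) (x : X), ‖∑ i ∈ s, b.coord i x • b.e i‖ ≤ K * ‖x‖ := by
  let P : Finset ℕ → X →L[ℝ] X := fun s => ∑ i ∈ s, (b.coord i).smulRight (b.e i)
  have hP : ∀ s x, P s x = ∑ i ∈ s, b.coord i x • b.e i := fun s x => by simp [P]
  obtain ⟨K, hK⟩ := banach_steinhaus (g := P) fun x => by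
    simpa only [hP] using (b.expansion x).summable.exists_forall_norm_sum_le
  exact ⟨K, (norm_nonneg _).trans (hK ∅), fun s x => hP s x ▸ (P s).le_of_opNorm_le (hK s) x⟩

lemma summable_smul_coord_smul {σ : ℕ → ℝ} {c : ℝ} (hσ : ∀ i, |σ i| ≤ c) (x : X) :
    Summable fun i => σ i • b.coord i x • b.e i := by
  have hc : 0 ≤ c := (abs_nonneg _).trans (hσ 0)
  refine summable_iff_vanishing_norm.2 fun ε hε => ?_
  obtain ⟨s₀, hs₀⟩ :=
    summable_iff_vanishing_norm.1 (b.expansion x).summable (ε / (2 * c + 1)) (by positivity)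
  refine ⟨s₀, fun t ht => ?_⟩
  calc ‖∑ i ∈ t, σ i • b.coord i x • b.e i‖ ≤ 2 * c * (ε / (2 * c + 1)) :=
        norm_sum_smul_le (fun t' ht' => (hs₀ t' (ht.mono_left ht')).le) (fun i _ => hσ i) hc
    _ < ε := by
        rw [← mul_div_assoc, div_lt_iff₀ (by positivity)]
        nlinarith

variable {b}

lemma exists_multiplier {K : ℝ}
    (hK : ∀ (s : Finset ℕ) (x : X), ‖∑ i ∈ s, b.coord i x • b.e i‖ ≤ K * ‖x‖)
    {σ : ℕ → ℝ} {c : ℝ} (hσ : ∀ i, |σ i| ≤ c) :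
    ∃ M : X →L[ℝ] X, (∀ x j, b.coord j (M x) = σ j * b.coord j x) ∧
      ∀ x, ‖M x‖ ≤ 2 * c * K * ‖x‖ := by
  have hc : 0 ≤ c := (abs_nonneg _).trans (hσ 0)
  have hsum (x : X) := (b.summable_smul_coord_smul hσ x).hasSum
  let M : X →L[ℝ] X := continuousLinearMapOfTendsto
    (fun s : Finset ℕ => ∑ i ∈ s, σ i • (b.coord i).smulRight (b.e i))
    (tendsto_pi_nhds.2 fun x => by
      simp only [sum_apply, smul_apply, ContinuousLinearMap.smulRight_apply]
      exact hsum x)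
  refine ⟨M, fun x j => ?_, fun x => ?_⟩
  · change b.coord j (∑' i, σ i • b.coord i x • b.e i) = _
    rw [(b.coord j).map_tsum (b.summable_smul_coord_smul hσ x), tsum_eq_single j]
    · simp [b.ortho]
    · intro i hi
      simp [b.ortho, Ne.symm hi]
  · refine le_of_tendsto' (hsum x).norm fun s => ?_
    calc ‖∑ i ∈ s, σ i • b.coord i x • b.e i‖ ≤ 2 * c * (K * ‖x‖) :=
          norm_sum_smul_le (fun t _ => hK t x) (fun i _ => hσ i) hc
      _ = 2 * c * K * ‖x‖ := by ring

end SchauderBasis'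

lemma ContinuousLinearMap.isClosed_range_and_nonempty_equiv_range {E F : Type*}
    [NormedAddCommGroup E] [NormedSpace ℝ E] [CompleteSpace E]
    [NormedAddCommGroup F] [NormedSpace ℝ F] [CompleteSpace F]
    (g : E →L[ℝ] F) {c : ℝ} (hc : 0 < c) (hg : ∀ w, c * ‖w‖ ≤ ‖g w‖) :
    IsClosed (LinearMap.range (g : E →ₗ[ℝ] F) : Set F) ∧
      Nonempty (E ≃L[ℝ] LinearMap.range (g : E →ₗ[ℝ] F)) := by
  have hanti : AntilipschitzWith (Real.toNNReal c⁻¹) g := g.antilipschitz_of_bound fun w => by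
    rw [Real.coe_toNNReal _ (inv_nonneg.2 hc.le), inv_mul_eq_div, le_div_iff₀ hc]
    linarith [hg w]
  have hclosed := hanti.isClosed_range g.uniformContinuous
  exact ⟨by rw [LinearMap.coe_range]; exact hclosed, ⟨g.equivRange hanti.injective hclosed⟩⟩

section TightBySupport

variable {X : Type*} [NormedAddCommGroup X] [NormedSpace ℝ X]

theorem SchauderBasis'.TightBySupport.strictlySingular_of_disjoint_coord [CompleteSpace X]
    {b : SchauderBasis' X} (hb : b.TightBySupport)
    {E : Type*} [NormedAddCommGroup E] [NormedSpace ℝ E] [CompleteSpace E]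
    {J S : E →L[ℝ] X} {c : ℝ} (hc : 0 < c) (hJ : ∀ w, c * ‖w‖ ≤ ‖J w‖)
    (hJS : ∀ w w' i, b.coord i (J w) ≠ 0 → b.coord i (S w') = 0) : StrictlySingular S := by
  rintro Y hY ⟨c', hc', hSY⟩
  have hSYb : ∀ w ∈ Y.topologicalClosure, c' * ‖w‖ ≤ ‖S w‖ := fun w hw =>
    closure_minimal (t := {w | c' * ‖w‖ ≤ ‖S w‖}) hSY (isClosed_le (by fun_prop) (by fun_prop))
      (by rwa [← Submodule.topologicalClosure_coe])
  have hYb : ¬ FiniteDimensional ℝ Y.topologicalClosure := fun _ =>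
    hY (Submodule.finiteDimensional_of_le Y.le_topologicalClosure)
  obtain ⟨hJc, ⟨eJ⟩⟩ := (J.comp Y.topologicalClosure.subtypeL)
    |>.isClosed_range_and_nonempty_equiv_range hc fun w => hJ w
  obtain ⟨hSc, ⟨eS⟩⟩ := (S.comp Y.topologicalClosure.subtypeL)
    |>.isClosed_range_and_nonempty_equiv_range hc' fun w => hSYb w w.2
  refine (hb _ _ hJc hSc (fun _ => hYb eJ.symm.toLinearEquiv.finiteDimensional)
    (fun _ => hYb eS.symm.toLinearEquiv.finiteDimensional) ?_).false (eJ.symm.trans eS)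
  rintro _ ⟨w, rfl⟩ _ ⟨w', rfl⟩ i
  exact hJS w w' i

theorem SchauderBasis'.TightBySupport.exists_eq_diagonal_comp_add_strictlySingular
    [CompleteSpace X] {b : SchauderBasis' X} (hb : b.TightBySupport) {V : Submodule ℝ X}
    [CompleteSpace V] (T : V →L[ℝ] X) (U : Set ℕ) (μ : ℕ → ℝ)
    (hV : ∀ (u : V) i, i ∉ U → b.coord i u = 0)
    (hTU : ∀ (u : V) i, i ∈ U → b.coord i (T u) = μ i * b.coord i u) :
    ∃ (D : X →L[ℝ] X) (S : V →L[ℝ] X),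
      b.IsDiagonal D ∧ StrictlySingular S ∧ T = D.comp V.subtypeL + S := by
  obtain ⟨K, hK0, hK⟩ := b.exists_norm_sum_coord_smul_le
  -- `C` is chosen so that `‖M (T u)‖ ≤ ‖u‖ / 2` below.
  set C := 4 * K * ‖T‖ + 1
  have hC : 0 < C := by positivity
  obtain ⟨D, hD, -⟩ := b.exists_multiplier hK (σ := fun i => if C < |μ i| then 0 else μ i)
    (c := C) fun i => by split_ifs with h <;> simp_all [hC.le]
  obtain ⟨M, hM, hMnorm⟩ := b.exists_multiplier hK
    (σ := fun i => if i ∈ U ∧ C < |μ i| then (μ i)⁻¹ else 0) (c := C⁻¹) fun i => by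
      split_ifs with h
      · rw [abs_inv]; exact inv_anti₀ hC h.2.le
      · simp [hC.le]
  refine ⟨D, T - D.comp V.subtypeL, b.isDiagonal_of_coord hD,
    hb.strictlySingular_of_disjoint_coord (J := V.subtypeL - M.comp T) (c := 1 / 2) (by norm_num)
      (fun u => ?_) (fun u w i hi => ?_), by abel⟩
  · have hsmall : ‖M (T u)‖ ≤ 1 / 2 * ‖u‖ := calc
      ‖M (T u)‖ ≤ 2 * C⁻¹ * K * ‖T u‖ := hMnorm _
      _ ≤ 2 * C⁻¹ * K * (‖T‖ * ‖u‖) := by gcongr; exact T.le_opNorm u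
      _ = 4 * K * ‖T‖ / C * (1 / 2 * ‖u‖) := by field_simp; ring
      _ ≤ 1 / 2 * ‖u‖ :=
        mul_le_of_le_one_left (by positivity) ((div_le_one hC).2 (by linarith))
    change 1 / 2 * ‖u‖ ≤ ‖(u : X) - M (T u)‖
    linarith [norm_sub_norm_le (u : X) (M (T u)), show ‖(u : X)‖ = ‖u‖ from rfl]
  · simp only [sub_apply, ContinuousLinearMap.comp_apply,
      Submodule.subtypeL_apply, map_sub, hM, hD] at hi ⊢
    by_cases hiU : i ∈ U
    · rw [hTU _ _ hiU] at hi ⊢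
      by_cases hbig : C < |μ i|
      · have hμ : μ i ≠ 0 := fun h => by simp [h] at hbig; linarith
        simp [hiU, hbig, hμ] at hi
      · simp [hbig]
    · simp [hV u i hiU, hiU] at hi

end TightBySupport

section BlockSequence

variable {X : Type*} [NormedAddCommGroup X] [NormedSpace ℝ X] (b : SchauderBasis' X) (x : ℕ → X)

lemma mem_closedSpan (n : ℕ) : x n ∈ closedSpan x :=
  Submodule.le_topologicalClosure _ (Submodule.subset_span ⟨n, rfl⟩)

def closedSpan.gen (n : ℕ) : closedSpan x := ⟨x n, mem_closedSpan x n⟩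

@[simp]
lemma closedSpan.coe_gen (n : ℕ) : (closedSpan.gen x n : X) = x n := rfl

instance closedSpan.completeSpace [CompleteSpace X] : CompleteSpace (closedSpan x) :=
  Submodule.topologicalClosure.completeSpace _

lemma dense_span_range_closedSpanGen :
    Dense ((Submodule.span ℝ (Set.range (closedSpan.gen x)) : Submodule ℝ (closedSpan x)) :
      Set (closedSpan x)) := by
  have himage : Subtype.val '' (Submodule.span ℝ (Set.range (closedSpan.gen x)) :
      Set (closedSpan x)) =
      (Submodule.span ℝ (Set.range x) : Set X) := by
    rw [← Submodule.coe_subtype, ← Submodule.map_coe, Submodule.map_span, ← Set.range_comp]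
    rfl
  have hind : Topology.IsInducing (Subtype.val : closedSpan x → X) := .subtypeVal
  rw [dense_iff_closure_eq, hind.closure_eq_preimage_closure_image, himage,
    ← Submodule.topologicalClosure_coe]
  exact Set.eq_univ_of_forall fun u => u.2

lemma closedSpan_le_ker {F : Type*} [NormedAddCommGroup F] [NormedSpace ℝ F] {f : X →L[ℝ] F}
    (h : ∀ n, f (x n) = 0) : closedSpan x ≤ LinearMap.ker (f : X →ₗ[ℝ] F) :=
  Submodule.topologicalClosure_minimal _ (Submodule.span_le.2 (Set.range_subset_iff.2 h))
    f.isClosed_ker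

noncomputable def blockSymbol (T : closedSpan x →L[ℝ] X) (i : ℕ) : ℝ :=
  if h : ∃ n, b.coord i (x n) ≠ 0 then
    b.coord i (T (closedSpan.gen x h.choose)) / b.coord i (x h.choose)
  else 0

variable {b x}

lemma SchauderBasis'.IsBlockSequence.eq_of_coord_ne_zero (hx : b.IsBlockSequence x) {i m n : ℕ}
    (hm : b.coord i (x m) ≠ 0) (hn : b.coord i (x n) ≠ 0) : m = n := by
  by_contra h
  rcases Nat.lt_or_gt_of_ne h with h | h
  · exact lt_irrefl i (hx.2.2 m n i i h hm hn)
  · exact lt_irrefl i (hx.2.2 n m i i h hn hm)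

lemma blockSymbol_eq (hx : b.IsBlockSequence x) (T : closedSpan x →L[ℝ] X) {i n : ℕ}
    (hn : b.coord i (x n) ≠ 0) :
    blockSymbol b x T i = b.coord i (T (closedSpan.gen x n)) / b.coord i (x n) := by
  have h : ∃ n, b.coord i (x n) ≠ 0 := ⟨n, hn⟩
  rw [blockSymbol, dif_pos h, hx.eq_of_coord_ne_zero h.choose_spec hn]

lemma coord_apply_eq_blockSymbol_mul (hx : b.IsBlockSequence x) {T : closedSpan x →L[ℝ] X}
    (hT : ∀ n m, n ≠ m → ∀ u : closedSpan x, (u : X) = x n →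
      ∀ i, b.coord i (T u) ≠ 0 → b.coord i (x m) = 0)
    {i n : ℕ} (hn : b.coord i (x n) ≠ 0) (u : closedSpan x) :
    b.coord i (T u) = blockSymbol b x T i * b.coord i u := by
  have hext : (b.coord i).comp T =
      blockSymbol b x T i • (b.coord i).comp (closedSpan x).subtypeL := by
    refine ContinuousLinearMap.ext_on (dense_span_range_closedSpanGen x) ?_
    rintro _ ⟨m, rfl⟩
    by_cases hmn : m = n
    · subst hmn
      simp [blockSymbol_eq hx T hn, div_mul_cancel₀ _ hn]
    · have hxm : b.coord i (x m) = 0 := by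
        by_contra h
        exact hmn (hx.eq_of_coord_ne_zero h hn)
      have hTm : b.coord i (T (closedSpan.gen x m)) = 0 := by
        by_contra h
        exact hn (hT m n hmn _ rfl i h)
      simp [hxm, hTm]
  simpa using congr($hext u)

end BlockSequence

/-- if supp(T xₙ) ∩ supp(x_m) = ∅ for n ≠ m, then T = D|_[xₙ] + S
with D diagonal and S strictly singular. -/
theorem stmt2 {X : Type*} [NormedAddCommGroup X] [NormedSpace ℝ X] [CompleteSpace X]
    (b : SchauderBasis' X) (hb : b.TightBySupport)
    (x : ℕ → X) (hx : b.IsBlockSequence x)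
    (T : ↥(closedSpan x) →L[ℝ] X)
    (hT : ∀ n m, n ≠ m → ∀ u : ↥(closedSpan x), (u : X) = x n →
      ∀ i, b.coord i (T u) ≠ 0 → b.coord i (x m) = 0) :
    ∃ (D : X →L[ℝ] X) (S : ↥(closedSpan x) →L[ℝ] X),
      b.IsDiagonal D ∧ StrictlySingular S ∧
      T = D.comp (closedSpan x).subtypeL + S := by
  refine hb.exists_eq_diagonal_comp_add_strictlySingular T {i | ∃ n, b.coord i (x n) ≠ 0}
    (blockSymbol b x T) (fun u i hi => ?_) fun u i ⟨n, hn⟩ =>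
      coord_apply_eq_blockSymbol_mul hx hT hn u
  simp only [Set.mem_ofPred_eq, not_exists, not_not] at hi
  exact closedSpan_le_ker x hi u.2
end

section
/- Let X be a Banach space with a tight by support basis such that there exist two block subspaces Y = [y_n] and Z = [z_n] satisfying: (D1) min(supp y_{n+1} ∪ supp z_{n+1}) ≥ max(supp y_n ∪ supp z_n); (D2) inf{‖y − z‖ : y ∈ Y, z ∈ Z, ‖y‖=‖z‖=1} > 0; and (D3) for every partition ℕ = F ∪ G with P_F|_Z strictly singular, the projection P_G|_Y is not strictly singular. Then the bounded projection P_Y: Y + Z → Y, y + z ↦ y, is not of the form D|_{Y+Z} + S for any bounded diagonal operator D on X and strictly singular operator S. -/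
open scoped BigOperators Classical
open Filter Topology

/-!
Suppose `P_Y = D + S` on `Y + Z` with `D` diagonal, `D eᵢ = λᵢ eᵢ`, and `S` strictly singular, and
let `F = {i | 1/2 ≤ |λᵢ|}`. Since the basis is unconditional, bounded multipliers act boundedly, so
`‖P_F v‖ ≲ ‖D v‖` and `‖P_{Fᶜ} v‖ ≲ ‖v - D v‖`. On `Z` we have `D = -S` and on `Y` we have
`I - D = S`, hence `P_F|_Z` and `P_{Fᶜ}|_Y` are both strictly singular, contradicting (D3).
-/

theorem Summable.exists_forall_norm_finset_sum_le {E ι : Type*} [SeminormedAddCommGroup E]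
    {f : ι → E} (hf : Summable f) :
    ∃ C, ∀ s : Finset ι, ‖∑ i ∈ s, f i‖ ≤ C := by
  classical
  obtain ⟨s₀, hs₀⟩ := hf.vanishing (Metric.ball_mem_nhds 0 one_pos)
  refine ⟨∑ i ∈ s₀, ‖f i‖ + 1, fun s => ?_⟩
  rw [← Finset.sum_inter_add_sum_sdiff s s₀]
  refine (norm_add_le _ _).trans (add_le_add ?_ ?_)
  · exact (norm_sum_le _ _).trans <| Finset.sum_le_sum_of_subset_of_nonneg
      Finset.inter_subset_right fun i _ _ => norm_nonneg _
  · simpa using (mem_ball_zero_iff.mp (hs₀ (s \ s₀) Finset.sdiff_disjoint)).le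

theorem norm_sum_smul_le_of_abs_le {X ι : Type*} [NormedAddCommGroup X] [NormedSpace ℝ X]
    [Fintype ι] (f : ι → X) {M c : ℝ}
    (hM : ∀ s : Finset ι, ‖∑ i ∈ s, f i‖ ≤ M) (hc : 0 ≤ c) {m : ι → ℝ}
    (hm : ∀ i, |m i| ≤ c) : ‖∑ i, m i • f i‖ ≤ 2 * c * M := by
  classical
  have hvertex : ∀ ε ∈ Set.univ.pi fun _ : ι => ({-c, c} : Set ℝ),
      Fintype.linearCombination ℝ f ε ∈ Metric.closedBall 0 (2 * c * M) := by
    intro ε hε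
    have hsplit : ∑ i, ε i • f i = c • ∑ i with ε i = c, f i - c • ∑ i with ¬ ε i = c, f i := by
      rw [← Finset.sum_filter_add_sum_filter_not _ (fun i => ε i = c), Finset.smul_sum,
        Finset.smul_sum, sub_eq_add_neg, ← Finset.sum_neg_distrib]
      congr 1 <;> refine Finset.sum_congr rfl fun i hi => ?_
      · rw [(Finset.mem_filter.mp hi).2]
      · have hεi : ε i = -c := ((hε i trivial).resolve_right (Finset.mem_filter.mp hi).2)
        rw [hεi, neg_smul]
    rw [mem_closedBall_zero_iff, Fintype.linearCombination_apply, hsplit]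
    calc ‖c • ∑ i with ε i = c, f i - c • ∑ i with ¬ ε i = c, f i‖
        ≤ c * M + c * M := by
          refine (norm_sub_le _ _).trans (add_le_add ?_ ?_) <;>
            rw [norm_smul, Real.norm_of_nonneg hc] <;> exact mul_le_mul_of_nonneg_left (hM _) hc
      _ = 2 * c * M := by ring
  have hm_mem : m ∈ convexHull ℝ (Set.univ.pi fun _ : ι => ({-c, c} : Set ℝ)) := by
    rw [convexHull_pi, Set.mem_univ_pi]
    intro i
    rw [convexHull_pair, segment_eq_Icc (by linarith)]
    exact abs_le.mp (hm i)
  have := (convex_closedBall (0 : X) (2 * c * M)).convexHull_subset_iff.mpr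
    (Set.image_subset_iff.mpr hvertex)
  rw [← LinearMap.image_convexHull] at this
  simpa [Fintype.linearCombination_apply] using this ⟨m, hm_mem, rfl⟩

namespace SchauderBasis'

variable {X : Type*} [NormedAddCommGroup X] [NormedSpace ℝ X] (b : SchauderBasis' X)

theorem coord_apply_of_apply_e {D : X →L[ℝ] X} {lam : ℕ → ℝ}
    (hD : ∀ i, D (b.e i) = lam i • b.e i) (x : X) (i : ℕ) :
    b.coord i (D x) = lam i * b.coord i x := by
  have hsum := ((b.coord i).comp D).hasSum (b.expansion x)
  have hterm : ∀ j, ((b.coord i).comp D) (b.coord j x • b.e j)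
      = if j = i then lam i * b.coord i x else 0 := by
    intro j
    simp only [ContinuousLinearMap.comp_apply, map_smul, hD, b.ortho, smul_eq_mul]
    by_cases hji : j = i
    · subst hji; simp only [if_true]; ring
    · simp [hji, Ne.symm hji]
  rw [funext hterm] at hsum
  exact hsum.unique (hasSum_ite_eq i _)

-- `HasSum` is unconditional summation, so every `SchauderBasis'` is an unconditional basis.
theorem exists_forall_norm_sum_coord_smul_le [CompleteSpace X] :
    ∃ K, ∀ (s : Finset ℕ) (x : X), ‖∑ i ∈ s, b.coord i x • b.e i‖ ≤ K * ‖x‖ := by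
  let proj : Finset ℕ → X →L[ℝ] X := fun s => ∑ i ∈ s, (b.coord i).smulRight (b.e i)
  have hproj : ∀ s x, proj s x = ∑ i ∈ s, b.coord i x • b.e i := by
    intro s x; simp [proj]
  obtain ⟨K, hK⟩ := banach_steinhaus (g := proj) fun x => by
    simpa only [hproj] using (b.expansion x).summable.exists_forall_norm_finset_sum_le
  exact ⟨K, fun s x => hproj s x ▸ (proj s).le_of_opNorm_le (hK s) x⟩

theorem exists_forall_norm_le_of_coord_eq_mul [CompleteSpace X] :
    ∃ K, ∀ (c : ℝ) (m : ℕ → ℝ) (v w : X), 0 ≤ c → (∀ i, |m i| ≤ c) →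
      (∀ i, b.coord i w = m i * b.coord i v) → ‖w‖ ≤ c * K * ‖v‖ := by
  obtain ⟨K, hK⟩ := b.exists_forall_norm_sum_coord_smul_le
  refine ⟨2 * K, fun c m v w hc hm hw => ?_⟩
  let f : ℕ → X := fun i => b.coord i v • b.e i
  have hsum : HasSum (fun i => m i • f i) w := by
    simpa only [f, hw, smul_smul] using b.expansion w
  refine le_of_tendsto' hsum.norm fun u => ?_
  have hu := norm_sum_smul_le_of_abs_le (fun i : u => f i) (M := K * ‖v‖)
    (fun s => by simpa [Finset.sum_map] using hK (s.map (Function.Embedding.subtype _)) v)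
    hc (m := fun i : u => m i) fun i => hm i
  rw [Finset.sum_coe_sort u (fun i => m i • f i)] at hu
  linarith

theorem exists_forall_norm_le_of_coord_eq_indicator [CompleteSpace X] :
    ∃ K, ∀ (ε : ℝ) (G : Set ℕ) (μ : ℕ → ℝ) (v w t : X), 0 < ε → (∀ i ∈ G, ε ≤ |μ i|) →
      (∀ i, b.coord i w = if i ∈ G then b.coord i v else 0) →
      (∀ i, b.coord i t = μ i * b.coord i v) → ‖w‖ ≤ ε⁻¹ * K * ‖t‖ := by
  obtain ⟨K, hK⟩ := b.exists_forall_norm_le_of_coord_eq_mul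
  refine ⟨K, fun ε G μ v w t hε hμ hw ht => hK ε⁻¹ (fun i => if i ∈ G then (μ i)⁻¹ else 0) t w
    (inv_nonneg.mpr hε.le) ?_ ?_⟩
  · intro i
    split_ifs with hi
    · rw [abs_inv]
      exact inv_anti₀ hε (hμ i hi)
    · simp [hε.le]
  · intro i
    rw [hw, ht]
    split_ifs with hi
    · have hμi : μ i ≠ 0 := fun h => by have := hμ i hi; rw [h, abs_zero] at this; linarith
      rw [inv_mul_cancel_left₀ hμi]
    · rw [zero_mul]

theorem exists_forall_norm_proj_le_of_isDiagonal [CompleteSpace X] {P : Set ℕ → X →L[ℝ] X}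
    (hP : ∀ G x i, b.coord i (P G x) = if i ∈ G then b.coord i x else 0) {D : X →L[ℝ] X}
    (hD : b.IsDiagonal D) :
    ∃ (F : Set ℕ) (K : ℝ), (∀ v, ‖P F v‖ ≤ K * ‖D v‖) ∧ ∀ v, ‖P Fᶜ v‖ ≤ K * ‖v - D v‖ := by
  choose lam hlam using hD
  obtain ⟨K, hK⟩ := b.exists_forall_norm_le_of_coord_eq_indicator
  refine ⟨{i | 1 / 2 ≤ |lam i|}, (1 / 2)⁻¹ * K, fun v => ?_, fun v => ?_⟩
  · exact hK _ _ lam v _ _ (by norm_num) (fun i hi => hi) (hP _ v)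
      (b.coord_apply_of_apply_e hlam v)
  · refine hK _ _ (fun i => 1 - lam i) v _ _ (by norm_num) (fun i hi => ?_) (hP _ v) fun i => ?_
    · have hi : |lam i| < 1 / 2 := lt_of_not_ge hi
      have := abs_sub_abs_le_abs_sub 1 (lam i)
      rw [abs_one] at this
      linarith
    · rw [map_sub, b.coord_apply_of_apply_e hlam]; ring

end SchauderBasis'

theorem StrictlySingular.of_norm_le_comp {E E' F G : Type*} [NormedAddCommGroup E]
    [NormedSpace ℝ E] [NormedAddCommGroup E'] [NormedSpace ℝ E'] [NormedAddCommGroup F]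
    [NormedSpace ℝ F] [NormedAddCommGroup G] [NormedSpace ℝ G] {S : E' →L[ℝ] G}
    (hS : StrictlySingular S) (T : E →L[ℝ] F) (j : E →ₗᵢ[ℝ] E') (C : ℝ)
    (hT : ∀ x, ‖T x‖ ≤ C * ‖S (j x)‖) : StrictlySingular T := by
  rintro Y hY ⟨c, hc, hcY⟩
  have hjY : ¬ FiniteDimensional ℝ (Y.map j.toLinearMap) := fun h =>
    hY (Module.Finite.equiv (Submodule.equivMapOfInjective _ j.injective Y).symm)
  refine hS _ hjY ⟨c / (|C| + 1), by positivity, ?_⟩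
  rintro _ ⟨x, hx, rfl⟩
  have hCx : C * ‖S (j x)‖ ≤ (|C| + 1) * ‖S (j x)‖ :=
    mul_le_mul_of_nonneg_right ((le_abs_self C).trans (le_add_of_nonneg_right zero_le_one))
      (norm_nonneg _)
  rw [LinearIsometry.coe_toLinearMap, LinearIsometry.norm_map, div_mul_eq_mul_div,
    div_le_iff₀ (by positivity)]
  linarith [hcY x hx, hT x]

theorem stmt13_general {X : Type*} [NormedAddCommGroup X] [NormedSpace ℝ X] [CompleteSpace X]
    (b : SchauderBasis' X)
    (P : Set ℕ → (X →L[ℝ] X))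
    (hP : ∀ (G : Set ℕ) (x : X) (i : ℕ),
      b.coord i (P G x) = if i ∈ G then b.coord i x else 0)
    (y z : ℕ → X)
    (hD3 : ∀ F G : Set ℕ, F ∪ G = Set.univ → F ∩ G = ∅ →
      StrictlySingular ((P F).comp (closedSpan z).subtypeL) →
      ¬ StrictlySingular ((P G).comp (closedSpan y).subtypeL))
    (Q : ↥(closedSpan y ⊔ closedSpan z) →L[ℝ] X)
    (hQ : ∀ w : ↥(closedSpan y ⊔ closedSpan z), ∀ u ∈ closedSpan y, ∀ v ∈ closedSpan z,
      (w : X) = u + v → Q w = u) :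
    ¬ ∃ (D : X →L[ℝ] X) (S : ↥(closedSpan y ⊔ closedSpan z) →L[ℝ] X),
        b.IsDiagonal D ∧ StrictlySingular S ∧
        Q = D.comp (closedSpan y ⊔ closedSpan z).subtypeL + S := by
  rintro ⟨D, S, hD, hS, rfl⟩
  obtain ⟨F, K, hPF, hPFc⟩ := b.exists_forall_norm_proj_le_of_isDiagonal hP hD
  let jY : closedSpan y →ₗᵢ[ℝ] ↥(closedSpan y ⊔ closedSpan z) :=
    ⟨Submodule.inclusion le_sup_left, fun _ => rfl⟩
  let jZ : closedSpan z →ₗᵢ[ℝ] ↥(closedSpan y ⊔ closedSpan z) :=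
    ⟨Submodule.inclusion le_sup_right, fun _ => rfl⟩
  refine hD3 F Fᶜ (Set.union_compl_self F) (Set.inter_compl_self F)
    (hS.of_norm_le_comp _ jZ K fun w => ?_) (hS.of_norm_le_comp _ jY K fun w => ?_)
  · have hQZ : D w + S (jZ w) = 0 := hQ (jZ w) 0 (zero_mem _) w w.2 (zero_add _).symm
    calc ‖P F w‖ ≤ K * ‖D w‖ := hPF w
      _ = K * ‖S (jZ w)‖ := by rw [eq_neg_of_add_eq_zero_right hQZ, norm_neg]
  · have hQY : D w + S (jY w) = w := hQ (jY w) w w.2 0 (zero_mem _) (add_zero _).symm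
    calc ‖P Fᶜ w‖ ≤ K * ‖w - D w‖ := hPFc w
      _ = K * ‖S (jY w)‖ := by rw [eq_sub_of_add_eq' hQY]

/-- if block subspaces Y = [yₙ], Z = [zₙ] of a tight by support
space satisfy (D1), (D2) and (D3), then the bounded projection
P_Y : Y + Z → Y is not a strictly singular perturbation of a restriction of a
diagonal operator. -/
theorem stmt13 {X : Type*} [NormedAddCommGroup X] [NormedSpace ℝ X] [CompleteSpace X]
    (b : SchauderBasis' X) (hb : b.TightBySupport)
    (P : Set ℕ → (X →L[ℝ] X))
    (hP : ∀ (G : Set ℕ) (x : X) (i : ℕ),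
      b.coord i (P G x) = if i ∈ G then b.coord i x else 0)
    (y z : ℕ → X) (hy : b.IsBlockSequence y) (hz : b.IsBlockSequence z)
    (hD1 : ∀ n i j, (b.coord i (y n) ≠ 0 ∨ b.coord i (z n) ≠ 0) →
      (b.coord j (y (n + 1)) ≠ 0 ∨ b.coord j (z (n + 1)) ≠ 0) → i ≤ j)
    (hD2 : ∃ δ > (0 : ℝ), ∀ u ∈ closedSpan y, ∀ v ∈ closedSpan z,
      ‖u‖ = 1 → ‖v‖ = 1 → δ ≤ ‖u - v‖)
    (hD3 : ∀ F G : Set ℕ, F ∪ G = Set.univ → F ∩ G = ∅ →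
      StrictlySingular ((P F).comp (closedSpan z).subtypeL) →
      ¬ StrictlySingular ((P G).comp (closedSpan y).subtypeL))
    (Q : ↥(closedSpan y ⊔ closedSpan z) →L[ℝ] X)
    (hQ : ∀ w : ↥(closedSpan y ⊔ closedSpan z), ∀ u ∈ closedSpan y, ∀ v ∈ closedSpan z,
      (w : X) = u + v → Q w = u) :
    ¬ ∃ (D : X →L[ℝ] X) (S : ↥(closedSpan y ⊔ closedSpan z) →L[ℝ] X),
        b.IsDiagonal D ∧ StrictlySingular S ∧
        Q = D.comp (closedSpan y ⊔ closedSpan z).subtypeL + S :=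
  stmt13_general b P hP y z hD3 Q hQ
end
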